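/- arXiv:1403.5170 — 3 statements merged into one kernel-verified Lean document; each statement's English description precedes it below -/
import Mathlib

section
/- Let K ⊆ L ⊆ A* be prefix-closed languages such that K is controllable with respect to L and A_u ⊆ A. If the natural projection P : A* → A_o* (A_o ⊆ A) is an L-observer and is OCC for L, then P(K) is controllable with respect to P(L) and A_u ∩ A_o. -/
variable {α : Type*}

/-- The natural projection onto subalphabet `B`: erases events not in `B`. -/
noncomputable def proj (B : Set α) (w : List α) : List α :=
  w.filter fun a => @decide (a ∈ B) (Classical.propDecidable _)

/-- Words over alphabet `A`. -/
def Words (A : Set α) : Set (List α) := {w | ∀ a ∈ w, a ∈ A}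

/-- Synchronous product of a family of languages `M i` over alphabets `B i`:
`‖_i M i = ⋂_i P_{B i}⁻¹ (M i)`, a language over `⋃ i, B i`. -/
def SyncProd {ι : Type*} (B : ι → Set α) (M : ι → Set (List α)) : Set (List α) :=
  {w | w ∈ Words (⋃ i, B i) ∧ ∀ i, proj (B i) w ∈ M i}

/-- Binary synchronous product of `M₁` over `B₁` and `M₂` over `B₂`. -/
def sync2 (B₁ B₂ : Set α) (M₁ M₂ : Set (List α)) : Set (List α) :=
  {w | w ∈ Words (B₁ ∪ B₂) ∧ proj B₁ w ∈ M₁ ∧ proj B₂ w ∈ M₂}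

/-- `K` is controllable with respect to `L` and uncontrollable events `Au`:
`K·Au ∩ L ⊆ K`. -/
def Controllable (K L : Set (List α)) (Au : Set α) : Prop :=
  ∀ s ∈ K, ∀ a ∈ Au, s ++ [a] ∈ L → s ++ [a] ∈ K

def PrefixClosed (L : Set (List α)) : Prop :=
  ∀ w ∈ L, ∀ v : List α, v <+: w → v ∈ L

/-- The projection onto `B` is an `L`-observer. -/
def IsObserver (B : Set α) (L : Set (List α)) : Prop :=
  ∀ t ∈ proj B '' L, ∀ s ∈ L, proj B s <+: t →
    ∃ u : List α, s ++ u ∈ L ∧ proj B (s ++ u) = t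

/-- The projection onto `Ao` is output control consistent (OCC) for `L`
(with uncontrollable events `Au`). -/
def OCC (Ao Au : Set α) (L : Set (List α)) : Prop :=
  ∀ s ∈ L, ∀ (mid : List α) (σk : α), σk ∈ Ao → (∀ a ∈ mid, a ∉ Ao) →
    (s = mid ++ [σk] ∨
      ∃ (s' : List α) (σ' : α), σ' ∈ Ao ∧ s = s' ++ σ' :: (mid ++ [σk])) →
    σk ∈ Au → ∀ a ∈ mid, a ∈ Au

/-- Supremal controllable sublanguage of `K` w.r.t. `L` and `Au`:
the union of all sublanguages of `K` controllable w.r.t. `L` and `Au`. -/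
def supC (K L : Set (List α)) (Au : Set α) : Set (List α) :=
  ⋃₀ {M | M ⊆ K ∧ Controllable M L Au}

/-- C&P coobservability of `K'` w.r.t. plant `L`, observation alphabets `Bo i`
and local controllable alphabets `Bc i`. -/
def Coobservable {ι : Type*} (Bo Bc : ι → Set α) (L K' : Set (List α)) : Prop :=
  ∀ s ∈ K', ∀ a ∈ ⋃ i, Bc i, s ++ [a] ∈ L → s ++ [a] ∉ K' →
    ∃ i, a ∈ Bc i ∧
      ∀ s' ∈ Words (⋃ j, Bo j), proj (Bo i) s' = proj (Bo i) s → s' ++ [a] ∉ K'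

/-- The closed-loop language of supervisor `S` over plant `M`:
the smallest language containing `ε` and closed under enabled extensions in `M`. -/
inductive InClosedLoop (S : List α → Set α) (M : Set (List α)) : List α → Prop
  | nil : InClosedLoop S M []
  | step {s : List α} {a : α} : InClosedLoop S M s → s ++ [a] ∈ M → a ∈ S s →
      InClosedLoop S M (s ++ [a])

def ClosedLoop (S : List α → Set α) (M : Set (List α)) : Set (List α) :=
  {w | InClosedLoop S M w}

/-- A supervisor over alphabet `B` whose control patterns contain the
uncontrollable events `Bu` (i.e. `Bu ⊆ S s ⊆ B`). -/
def IsSupervisor (B Bu : Set α) (S : List α → Set α) : Prop :=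
  ∀ s : List α, Bu ⊆ S s ∧ S s ⊆ B

/-- The coordinator language `L_k = ‖_{i=1}^n P_k (L i)` (each `P_k(L i)` being a
language over `A i ∩ Ak`). -/
def coordLang {n : ℕ} (A : Fin n → Set α) (Ak : Set α) (L : Fin n → Set (List α)) :
    Set (List α) :=
  SyncProd (fun i => A i ∩ Ak) (fun i => proj Ak '' L i)

/-- Two-level conditional controllability of `K` w.r.t. plants `L i` over `A i`,
grouping `g`, group-coordinator alphabets `Akj j` (coordinators
`L_{k_j} = ‖_i P_{k_j}(L i)`), and uncontrollable events `Au`. -/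
def TwoLevelCC {n m : ℕ} (A : Fin n → Set α) (g : Fin n → Fin m) (Akj : Fin m → Set α)
    (L : Fin n → Set (List α)) (Au : Set α) (K : Set (List α)) : Prop :=
  (∀ j : Fin m, Controllable (proj (Akj j) '' K) (coordLang A (Akj j) L) (Akj j ∩ Au)) ∧
  (∀ i : Fin n, Controllable (proj (A i ∪ Akj (g i)) '' K)
      (sync2 (A i) (Akj (g i)) (L i) (proj (Akj (g i)) '' K))
      ((A i ∪ Akj (g i)) ∩ Au))

/-- `supC_{k_j}`. -/
def supCk {n : ℕ} (A : Fin n → Set α) (Akj : Set α) (L : Fin n → Set (List α))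
    (Au : Set α) (K : Set (List α)) : Set (List α) :=
  supC (proj Akj '' K) (coordLang A Akj L) (Akj ∩ Au)

/-- `supC_{i+k_j}` (with `j = g i`). -/
def supCik {n m : ℕ} (A : Fin n → Set α) (g : Fin n → Fin m) (Akj : Fin m → Set α)
    (L : Fin n → Set (List α)) (Au : Set α) (K : Set (List α)) (i : Fin n) :
    Set (List α) :=
  supC (proj (A i ∪ Akj (g i)) '' K)
    (sync2 (A i) (Akj (g i)) (L i) (supCk A (Akj (g i)) L Au K))
    ((A i ∪ Akj (g i)) ∩ Au)

/-- Two-level conditional decomposability of `K` w.r.t. `(A i)`, the high-level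
coordinator alphabet `Ak` and the low-level coordinator alphabets `Akj j`. -/
def TwoLevelCD {n m : ℕ} (A : Fin n → Set α) (g : Fin n → Fin m) (Ak : Set α)
    (Akj : Fin m → Set α) (K : Set (List α)) : Prop :=
  K = SyncProd (fun r : Fin m => (⋃ i ∈ {i | g i = r}, A i) ∪ Ak)
        (fun r => proj ((⋃ i ∈ {i | g i = r}, A i) ∪ Ak) '' K) ∧
  ∀ r : Fin m, proj ((⋃ i ∈ {i | g i = r}, A i) ∪ Ak) '' K =
    SyncProd (fun i : {i : Fin n // g i = r} => A i.1 ∪ Akj r)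
      (fun i => proj (A i.1 ∪ Akj r) '' K)

/-- The supremal two-level conditionally controllable sublanguage of `K`. -/
def supTwoCC {n m : ℕ} (A : Fin n → Set α) (g : Fin n → Fin m) (Akj : Fin m → Set α)
    (L : Fin n → Set (List α)) (Au : Set α) (K : Set (List α)) : Set (List α) :=
  ⋃₀ {K' | K' ⊆ K ∧ PrefixClosed K' ∧ TwoLevelCC A g Akj L Au K'}

/-! Observability of `a` after `s` lets the observer property produce an extension
`s ++ m ++ [a]` of `s` in `L` with `m` unobservable. OCC, applied to the stretch from the last
observable event of `s` to `a`, makes `m` uncontrollable, so controllability of `K` pushes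
`s` along `m ++ [a]` inside `K`, and this word projects to `P(s) a`. -/

lemma proj_append (B : Set α) (u v : List α) :
    proj B (u ++ v) = proj B u ++ proj B v :=
  List.filter_append ..

lemma proj_eq_nil_iff {B : Set α} {u : List α} : proj B u = [] ↔ ∀ x ∈ u, x ∉ B := by
  simp [proj, List.filter_eq_nil_iff]

lemma proj_singleton_of_mem {B : Set α} {a : α} (ha : a ∈ B) : proj B [a] = [a] := by
  simp [proj, ha]

lemma proj_eq_singleton_iff {B : Set α} {u : List α} {a : α} :
    proj B u = [a] ↔
      ∃ m m', u = m ++ a :: m' ∧ (∀ x ∈ m, x ∉ B) ∧ a ∈ B ∧ ∀ x ∈ m', x ∉ B := by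
  simp [proj, List.filter_eq_cons_iff, List.filter_eq_nil_iff]

lemma PrefixClosed.append_left_mem {L : Set (List α)} (hL : PrefixClosed L) {u v : List α}
    (h : u ++ v ∈ L) : u ∈ L :=
  hL _ h u (List.prefix_append u v)

lemma Controllable.append_mem {K L : Set (List α)} {Au : Set α} (hcont : Controllable K L Au)
    (hL : PrefixClosed L) {s : List α} (hs : s ∈ K) :
    ∀ m : List α, (∀ x ∈ m, x ∈ Au) → s ++ m ∈ L → s ++ m ∈ K := by
  intro m
  induction m using List.reverseRecOn with
  | nil => exact fun _ _ => by simpa using hs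
  | append_singleton m x ih =>
    intro hmAu hmL
    rw [← List.append_assoc] at hmL ⊢
    exact hcont _ (ih (fun y hy => hmAu y (by simp [hy])) (hL.append_left_mem hmL)) x
      (hmAu x (by simp)) hmL

lemma OCC.forall_mem_of_append_mem {Ao Au : Set α} {L : Set (List α)} (hocc : OCC Ao Au L)
    {a : α} (haAo : a ∈ Ao) (haAu : a ∈ Au) :
    ∀ (s m : List α), s ++ m ++ [a] ∈ L → (∀ x ∈ m, x ∉ Ao) → ∀ x ∈ m, x ∈ Au := by
  intro s
  induction s using List.reverseRecOn with
  | nil =>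
    intro m hm hmAo
    exact hocc _ hm m a haAo hmAo (Or.inl (by simp)) haAu
  | append_singleton s c ih =>
    intro m hm hmAo
    by_cases hc : c ∈ Ao
    · exact hocc _ hm m a haAo hmAo (Or.inr ⟨s, c, hc, by simp⟩) haAu
    · -- `c` is unobservable, so it joins the stretch
      have hcm := ih (c :: m) (by simpa using hm) (by simpa [hc] using hmAo)
      exact fun x hx => hcm x (List.mem_cons_of_mem c hx)

lemma IsObserver.exists_append_mem {B : Set α} {L : Set (List α)} (hobs : IsObserver B L)
    (hL : PrefixClosed L) {s : List α} (hs : s ∈ L) {a : α}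
    (ha : proj B s ++ [a] ∈ proj B '' L) :
    ∃ m, (∀ x ∈ m, x ∉ B) ∧ s ++ m ++ [a] ∈ L := by
  obtain ⟨u, hu, hproj⟩ := hobs _ ha s hs ⟨[a], rfl⟩
  rw [proj_append, List.append_cancel_left_eq] at hproj
  obtain ⟨m, m', rfl, hm, -, -⟩ := proj_eq_singleton_iff.mp hproj
  refine ⟨m, hm, hL.append_left_mem (v := m') ?_⟩
  simpa using hu

theorem stmt_1_general (Au Ao : Set α)
    (K L : Set (List α)) (hKL : K ⊆ L)
    (hLpc : PrefixClosed L)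
    (hcont : Controllable K L Au)
    (hobs : IsObserver Ao L) (hocc : OCC Ao Au L) :
    Controllable (proj Ao '' K) (proj Ao '' L) (Au ∩ Ao) := by
  rintro _ ⟨s, hsK, rfl⟩ a ⟨haAu, haAo⟩ ha
  obtain ⟨m, hmAo, hmL⟩ := hobs.exists_append_mem hLpc (hKL hsK) ha
  have hmAu := hocc.forall_mem_of_append_mem haAo haAu s m hmL hmAo
  have hmaK : s ++ (m ++ [a]) ∈ K :=
    hcont.append_mem hLpc hsK _ (by simpa [or_imp, forall_and] using ⟨hmAu, haAu⟩)
      (by simpa using hmL)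
  refine ⟨_, hmaK, ?_⟩
  rw [proj_append, proj_append, proj_eq_nil_iff.mpr hmAo, proj_singleton_of_mem haAo,
    List.nil_append]

/-- If `K ⊆ L` is controllable w.r.t. `L` and `Au`, and the projection
onto `Ao` is an `L`-observer and OCC for `L`, then `P(K)` is controllable w.r.t.
`P(L)` and `Au ∩ Ao`. -/
theorem stmt_1 (A Au Ao : Set α) (hAu : Au ⊆ A) (hAo : Ao ⊆ A)
    (K L : Set (List α)) (hKL : K ⊆ L) (hLW : L ⊆ Words A)
    (hKpc : PrefixClosed K) (hLpc : PrefixClosed L)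
    (hcont : Controllable K L Au)
    (hobs : IsObserver Ao L) (hocc : OCC Ao Au L) :
    Controllable (proj Ao '' K) (proj Ao '' L) (Au ∩ Ao) :=
  stmt_1_general Au Ao K L hKL hLpc hcont hobs hocc
end

section
/- Let A = ∪_{i=1}^n A_i, A_u ⊆ A, and A_{i,u} = A_i ∩ A_u. For i = 1,…,n, let K_i ⊆ L_i ⊆ A_i* be prefix-closed languages such that K_i is controllable with respect to L_i and A_{i,u}. Then the synchronous product ‖_{i=1}^n K_i is controllable with respect to ‖_{i=1}^n L_i and ∪_{i=1}^n A_{i,u}. -/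
variable {α : Type*}

lemma proj_append_singleton_of_mem {B : Set α} {a : α} (s : List α) (ha : a ∈ B) :
    proj B (s ++ [a]) = proj B s ++ [a] := by
  simp [proj, List.filter_append, ha]

lemma proj_append_singleton_of_notMem {B : Set α} {a : α} (s : List α) (ha : a ∉ B) :
    proj B (s ++ [a]) = proj B s := by
  simp [proj, List.filter_append, ha]

lemma Controllable.anti {K L : Set (List α)} {U V : Set α} (h : Controllable K L U)
    (hVU : V ⊆ U) : Controllable K L V :=
  fun s hs a ha => h s hs a (hVU ha)

/- Appending `a` to `s` changes the `i`-th projection only when `a ∈ B i`, and then by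
appending `a` itself; so each component is handled by its own controllability. -/
theorem Controllable.syncProd {ι : Type*} {B : ι → Set α} {K L : ι → Set (List α)}
    {Au : Set α} (h : ∀ i, Controllable (K i) (L i) (B i ∩ Au)) :
    Controllable (SyncProd B K) (SyncProd B L) Au := by
  rintro s ⟨-, hsK⟩ a hau ⟨hW, hL⟩
  refine ⟨hW, fun i => ?_⟩
  by_cases hai : a ∈ B i
  · have hLi := hL i
    rw [proj_append_singleton_of_mem s hai] at hLi ⊢
    exact h i _ (hsK i) a ⟨hai, hau⟩ hLi
  · rw [proj_append_singleton_of_notMem s hai]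
    exact hsK i

theorem stmt_2_general (n : ℕ) (A : Fin n → Set α) (Au : Set α)
    (K L : Fin n → Set (List α))
    (hcont : ∀ i, Controllable (K i) (L i) (A i ∩ Au)) :
    Controllable (SyncProd A K) (SyncProd A L) (⋃ i, A i ∩ Au) :=
  (Controllable.syncProd hcont).anti (Set.iUnion_subset fun _ => Set.inter_subset_right)

/-- If each `K i ⊆ L i ⊆ (A i)*` is controllable w.r.t. `L i` and
`A i ∩ Au`, then `‖ K i` is controllable w.r.t. `‖ L i` and `⋃ (A i ∩ Au)`. -/
theorem stmt_2 (n : ℕ) (A : Fin n → Set α) (Au : Set α) (hAu : Au ⊆ ⋃ i, A i)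
    (K L : Fin n → Set (List α))
    (hKL : ∀ i, K i ⊆ L i) (hLW : ∀ i, L i ⊆ Words (A i))
    (hKpc : ∀ i, PrefixClosed (K i)) (hLpc : ∀ i, PrefixClosed (L i))
    (hcont : ∀ i, Controllable (K i) (L i) (A i ∩ Au)) :
    Controllable (SyncProd A K) (SyncProd A L) (⋃ i, A i ∩ Au) :=
  stmt_2_general n A Au K L hcont
end

section
/- Let A_1,…,A_n be alphabets, A = ∪_{i=1}^n A_i, and let A_k ⊆ A be a coordinator alphabet. A language K ⊆ A* is conditionally decomposable with respect to (A_i)_{i=1}^n and A_k, i.e., K = ‖_{i=1}^n P_{i+k}(K), if and only if there exist languages M_i ⊆ (A_i ∪ A_k)* (i = 1,…,n) such that K = ‖_{i=1}^n M_i. -/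
variable {α : Type*}

theorem proj_mem_words (B : Set α) (w : List α) : proj B w ∈ Words B := by
  intro a ha
  simpa [proj] using (List.mem_filter.mp ha).2

theorem words_mono {A B : Set α} (h : A ⊆ B) : Words A ⊆ Words B :=
  fun _ hw a ha => h (hw a ha)

section SyncProd

variable {ι : Type*} {B : ι → Set α}

theorem syncProd_mono {M N : ι → Set (List α)} (h : ∀ i, M i ⊆ N i) :
    SyncProd B M ⊆ SyncProd B N :=
  fun _ hw => ⟨hw.1, fun i => h i (hw.2 i)⟩

theorem proj_image_syncProd_subset (M : ι → Set (List α)) (i : ι) :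
    proj (B i) '' SyncProd B M ⊆ M i := by
  rintro _ ⟨w, hw, rfl⟩
  exact hw.2 i

theorem subset_syncProd_proj_image {K : Set (List α)} (hK : K ⊆ Words (⋃ i, B i)) :
    K ⊆ SyncProd B (fun i => proj (B i) '' K) :=
  fun w hw => ⟨hK hw, fun _ => ⟨w, hw, rfl⟩⟩

end SyncProd

theorem stmt_5_general (n : ℕ) (A : Fin n → Set α) (Ak : Set α)
    (K : Set (List α)) (hK : K ⊆ Words (⋃ i, A i)) :
    K = SyncProd (fun i => A i ∪ Ak) (fun i => proj (A i ∪ Ak) '' K) ↔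
      ∃ M : Fin n → Set (List α), (∀ i, M i ⊆ Words (A i ∪ Ak)) ∧
        K = SyncProd (fun i => A i ∪ Ak) M := by
  constructor
  · intro hK_eq
    exact ⟨_, fun i => Set.image_subset_iff.mpr fun w _ => proj_mem_words _ w, hK_eq⟩
  · rintro ⟨M, -, rfl⟩
    refine (subset_syncProd_proj_image (hK.trans (words_mono ?_))).antisymm
      (syncProd_mono (proj_image_syncProd_subset M))
    exact Set.iUnion_mono fun i => Set.subset_union_left

/-- `K` is conditionally decomposable w.r.t. `(A i)` and `Ak` iff
there exist languages `M i ⊆ (A i ∪ Ak)*` with `K = ‖ M i`. -/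
theorem stmt_5 (n : ℕ) (A : Fin n → Set α) (Ak : Set α)
    (hsh : ∀ i j, i ≠ j → A i ∩ A j ⊆ Ak) (hAk : Ak ⊆ ⋃ i, A i)
    (K : Set (List α)) (hK : K ⊆ Words (⋃ i, A i)) :
    K = SyncProd (fun i => A i ∪ Ak) (fun i => proj (A i ∪ Ak) '' K) ↔
      ∃ M : Fin n → Set (List α), (∀ i, M i ⊆ Words (A i ∪ Ak)) ∧
        K = SyncProd (fun i => A i ∪ Ak) M :=
  stmt_5_general n A Ak K hK
end
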